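/- arXiv:1910.10200 — 8 statements merged into one kernel-verified Lean document; each statement's English description precedes it below -/
import Mathlib

section
/- Let A be an n-ary algebra, and suppose that for every k ≥ 1, every tuple c_1,...,c_k ∈ A, and all scalars α_i^j (1 ≤ i ≤ n, 1 ≤ j ≤ k), the vectors c_1,...,c_k,[a_1,...,a_n] are linearly dependent, where a_i = Σ_j α_i^j c_j. Then A is subalgebraic, i.e., [a_1,...,a_n] ∈ span(a_1,...,a_n) for all a_1,...,a_n ∈ A. -/
def Subalgebraic {k W : Type*} [Field k] [AddCommGroup W] [Module k W] {n : ℕ}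
    (μ : MultilinearMap k (fun _ : Fin n => W) W) : Prop :=
  ∀ a : Fin n → W, μ a ∈ Submodule.span k (Set.range a)

/-! Given `a_1, …, a_n`, choose a basis `c_1, …, c_K` of their span and write each `a_i` in it.
If `K ≥ 1`, the hypothesis makes `c_1, …, c_K, [a_1, …, a_n]` dependent, and since the `c_j`
are independent, `[a_1, …, a_n]` lies in their span. If `K = 0`, every `a_i` vanishes, hence
so does `[a_1, …, a_n]` by multilinearity. -/

open Submodule Set

theorem exists_linearIndependent_fin_span_range_eq (k : Type*) {V ι : Type*} [Field k]
    [AddCommGroup V] [Module k V] [Finite ι] (a : ι → V) :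
    ∃ (K : ℕ) (c : Fin K → V), LinearIndependent k c ∧ span k (range c) = span k (range a) := by
  have := Module.Finite.span_of_finite k (finite_range a)
  let b := Module.finBasis k (span k (range a))
  refine ⟨_, (span k (range a)).subtype ∘ b, b.linearIndependent.map' _ (ker_subtype _), ?_⟩
  rw [range_comp, span_image, b.span_eq, map_subtype_top]

theorem mem_span_of_not_linearIndependent_snoc {k V : Type*} [Field k] [AddCommGroup V]
    [Module k V] {K : ℕ} {c : Fin K → V} (hc : LinearIndependent k c) {x : V}
    (hx : ¬ LinearIndependent k (Fin.snoc c x : Fin (K + 1) → V)) :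
    x ∈ span k (range c) := by
  by_contra hxc
  exact hx (linearIndependent_finSnoc.2 ⟨hc, hxc⟩)

/-- if for every tuple `c_1,…,c_K` and all scalars `α_i^j`, the vectors
`c_1,…,c_K,[a_1,…,a_n]` (with `a_i = ∑_j α_i^j c_j`) are linearly dependent, then the
algebra is subalgebraic. -/
theorem subalgebraic_of_linear_dependence
    {k V : Type*} [Field k] [AddCommGroup V] [Module k V]
    (n : ℕ) (hn : 2 ≤ n) (μ : MultilinearMap k (fun _ : Fin n => V) V)
    (h : ∀ (K : ℕ), 1 ≤ K → ∀ (c : Fin K → V) (α : Fin n → Fin K → k),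
      ¬ LinearIndependent k
        (Fin.snoc c (μ (fun i => ∑ j : Fin K, α i j • c j)) : Fin (K + 1) → V)) :
    Subalgebraic μ := by
  intro a
  obtain ⟨K, c, hc, hspan⟩ := exists_linearIndependent_fin_span_range_eq k a
  have ha_mem (i : Fin n) : a i ∈ span k (range c) := hspan ▸ subset_span (mem_range_self i)
  choose α hα using fun i => (mem_span_range_iff_exists_fun k).1 (ha_mem i)
  obtain rfl : (fun i => ∑ j, α i j • c j) = a := funext hα
  rcases Nat.eq_zero_or_pos K with rfl | hK
  · rw [μ.map_coord_zero ⟨0, by omega⟩ (Fin.sum_univ_zero _)]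
    exact zero_mem _
  · exact hspan ▸ mem_span_of_not_linearIndependent_snoc hc (h K hK c α)
end

section
/- Let A be an n-ary algebra with nonzero multiplication that is both subalgebraic and an algebra of an n-linear form. Then A has zero multiplication; equivalently, the only n-ary algebra structure that is simultaneously subalgebraic and an algebra of an n-linear form is the zero multiplication. -/
/-- `μ` is an algebra of an `n`-linear form: there is a nonzero `a` such that all
products lie in `span {a}` and any product with an argument equal to `a` vanishes. -/
def IsFormAlgebra {k W : Type*} [Field k] [AddCommGroup W] [Module k W] {n : ℕ}
    (μ : MultilinearMap k (fun _ : Fin n => W) W) : Prop :=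
  ∃ a : W, a ≠ 0 ∧ (∀ x : Fin n → W, μ x ∈ Submodule.span k {a}) ∧
    (∀ x : Fin n → W, (∃ i, x i = a) → μ x = 0)

/-! Pick a functional `g` with `g a = 1`. Since every product with an argument `a` vanishes,
`μ x` does not change when each `x i` is replaced by its component `x i - g (x i) • a` in
`ker g`. By subalgebraicity the product of those components lies in `ker g`, so `g (μ x) = 0`;
as `μ x` is a multiple of `a`, it is zero. -/

namespace MultilinearMap

variable {R ι M N : Type*} [CommRing R] [AddCommGroup M] [Module R M]
  [AddCommGroup N] [Module R N]

theorem map_piecewise_sub_smul_of_map_eq_zero [DecidableEq ι]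
    (μ : MultilinearMap R (fun _ : ι => M) N) {a : M}
    (hμa : ∀ x : ι → M, (∃ i, x i = a) → μ x = 0) (c : ι → R) (x : ι → M)
    (s : Finset ι) :
    μ (s.piecewise (fun i => x i - c i • a) x) = μ x := by
  induction s using Finset.induction with
  | empty => rw [Finset.piecewise_empty]
  | insert j s hj ih =>
    have hxj : s.piecewise (fun i => x i - c i • a) x j = x j :=
      Finset.piecewise_eq_of_notMem _ _ _ hj
    rw [Finset.piecewise_insert, μ.map_update_sub, μ.map_update_smul,
      hμa _ ⟨j, Function.update_self _ _ _⟩, smul_zero, sub_zero, ← hxj,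
      Function.update_eq_self, ih]

theorem map_sub_smul_of_map_eq_zero [Fintype ι]
    (μ : MultilinearMap R (fun _ : ι => M) N) {a : M}
    (hμa : ∀ x : ι → M, (∃ i, x i = a) → μ x = 0) (c : ι → R) (x : ι → M) :
    μ (fun i => x i - c i • a) = μ x := by
  classical
  simpa only [Finset.piecewise_univ] using μ.map_piecewise_sub_smul_of_map_eq_zero hμa c x Finset.univ

end MultilinearMap

theorem Subalgebraic.map_apply_eq_zero {k W : Type*} [Field k] [AddCommGroup W] [Module k W]
    {n : ℕ} {μ : MultilinearMap k (fun _ : Fin n => W) W} (hμ : Subalgebraic μ)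
    (g : Module.Dual k W) {x : Fin n → W} (hx : ∀ i, g (x i) = 0) : g (μ x) = 0 := by
  have hle : Submodule.span k (Set.range x) ≤ LinearMap.ker g := by
    rw [Submodule.span_le]
    rintro _ ⟨i, rfl⟩
    exact hx i
  exact hle (hμ x)

theorem subalgebraic_and_form_algebra_is_zero_general
    {k V : Type*} [Field k] [AddCommGroup V] [Module k V]
    (n : ℕ) (μ : MultilinearMap k (fun _ : Fin n => V) V)
    (hsub : Subalgebraic μ) (hform : IsFormAlgebra μ) :
    μ = 0 := by
  obtain ⟨a, ha, hspan, hμa⟩ := hform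
  obtain ⟨g, hga⟩ := Module.Projective.exists_dual_eq_one k ha
  ext x
  obtain ⟨c, hc⟩ := Submodule.mem_span_singleton.mp (hspan x)
  have hgμ : g (μ x) = 0 := by
    rw [← μ.map_sub_smul_of_map_eq_zero hμa (fun i => g (x i)) x]
    exact hsub.map_apply_eq_zero g fun i => by simp [hga]
  rw [← hc, map_smul, hga, smul_eq_mul, mul_one] at hgμ
  rw [zero_apply, ← hc, hgμ, zero_smul]

/-- an algebra that is simultaneously subalgebraic and an algebra of an
`n`-linear form has zero multiplication. -/
theorem subalgebraic_and_form_algebra_is_zero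
    {k V : Type*} [Field k] [AddCommGroup V] [Module k V]
    (n : ℕ) (hn : 2 ≤ n) (μ : MultilinearMap k (fun _ : Fin n => V) V)
    (hsub : Subalgebraic μ) (hform : IsFormAlgebra μ) :
    μ = 0 :=
  subalgebraic_and_form_algebra_is_zero_general n μ hsub hform
end

section
/- Let Δ : U^⊗n → k be an n-linear form on a vector space U, and let A = U ⊕ k be the algebra of the form Δ, with multiplication [(u_1,α_1),...,(u_n,α_n)] = (0, Δ(u_1 ⊗ ... ⊗ u_n)). Then the element a = (0,1) ∈ A satisfies: [x_1,...,x_n] ∈ span(a) for all x_i ∈ A, and [x_1,...,x_n] = 0 whenever x_i = a for some i. Conversely, any n-ary algebra A possessing a nonzero element a with these two properties is isomorphic to the algebra of some n-linear form on a complement U of span(a). -/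
/-- The algebra of the `n`-linear form `Δ : U^⊗n → k`, on the space `U × k`, with
multiplication `[(u_1,α_1),…,(u_n,α_n)] = (0, Δ(u_1 ⊗ … ⊗ u_n))`. -/
def formAlg {k U : Type*} [Field k] [AddCommGroup U] [Module k U] {n : ℕ}
    (Δ : MultilinearMap k (fun _ : Fin n => U) k) :
    MultilinearMap k (fun _ : Fin n => U × k) (U × k) :=
  (LinearMap.inr k U k).compMultilinearMap
    (Δ.compLinearMap fun _ => LinearMap.fst k U k)

/-- the element `a = (0,1)` of the algebra of a form satisfies the two
characteristic properties, and conversely any algebra with such a nonzero element is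
isomorphic to the algebra of some `n`-linear form on a complement of `span {a}`. -/
theorem form_algebra_characterization (k : Type*) [Field k] (n : ℕ) (hn : 2 ≤ n) :
    (∀ (U : Type) [AddCommGroup U] [Module k U]
        (Δ : MultilinearMap k (fun _ : Fin n => U) k),
      (∀ x : Fin n → U × k, formAlg Δ x ∈ Submodule.span k {((0 : U), (1 : k))}) ∧
        (∀ x : Fin n → U × k, (∃ i, x i = ((0 : U), (1 : k))) → formAlg Δ x = 0)) ∧
    (∀ (W : Type) [AddCommGroup W] [Module k W]
        (μ : MultilinearMap k (fun _ : Fin n => W) W) (a : W), a ≠ 0 →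
      (∀ x : Fin n → W, μ x ∈ Submodule.span k {a}) →
      (∀ x : Fin n → W, (∃ i, x i = a) → μ x = 0) →
      ∃ U : Submodule k W, IsCompl U (Submodule.span k {a}) ∧
        ∃ (Δ : MultilinearMap k (fun _ : Fin n => U) k) (e : W ≃ₗ[k] U × k),
          ∀ x : Fin n → W, e (μ x) = formAlg Δ (fun i => e (x i))) := by
  constructor
  · intro U _ _ Δ
    refine ⟨fun x => ?_, fun x ⟨i, hi⟩ => ?_⟩
    · rw [Submodule.mem_span_singleton]
      exact ⟨Δ (fun i => (x i).1), by simp [formAlg, Prod.ext_iff]⟩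
    · have h0 : (Δ fun j => (x j).1) = 0 :=
        Δ.map_coord_zero (m := fun j => (x j).1) i (by simp [hi])
      simp [formAlg, h0]
  · intro W _ _ μ a ha h1 h2
    obtain ⟨U, hU⟩ := Submodule.exists_isCompl (Submodule.span k {a})
    refine ⟨U, hU.symm, ?_⟩
    set S := Submodule.span k {a} with hS
    set E := ((LinearEquiv.refl k U).prodCongr
        (LinearEquiv.toSpanNonzeroSingleton k W a ha)).trans
      (Submodule.prodEquivOfIsCompl U S hU.symm) with hE
    have esymm : ∀ (p : U) (c : k), (E (p, c) : W) = ↑p + c • a := by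
      intro p c
      show (↑p + ↑(LinearEquiv.toSpanNonzeroSingleton k W a ha c) : W) = ↑p + c • a
      rw [LinearEquiv.toSpanNonzeroSingleton_apply]
    set e : W ≃ₗ[k] U × k := E.symm with he
    -- key invariance
    have key : ∀ x y : Fin n → W, (∀ i, x i - y i ∈ S) → μ x = μ y := by
      intro x y hxy
      choose c hc using fun i => (Submodule.mem_span_singleton.mp (hxy i))
      have step : ∀ s : Finset (Fin n),
          μ (fun i => if i ∈ s then y i else x i) = μ x := by
        intro s
        induction s using Finset.induction with
        | empty => simp
        | @insert j s' hj ih =>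
          have hupd : (fun i => if i ∈ insert j s' then y i else x i) =
              Function.update (fun i => if i ∈ s' then y i else x i) j (y j) := by
            funext i
            rcases eq_or_ne i j with rfl | hij
            · simp
            · simp [Function.update_of_ne hij, hij]
          set v := fun i => if i ∈ s' then y i else x i with hv
          have hx : x j = y j + c j • a := by
            have h := (hc j).symm
            rw [← h]; abel
          have h5 : Function.update v j (x j) = v := by
            have hvj : v j = x j := by simp [hv, hj]
            rw [← hvj]; exact Function.update_eq_self j v
          have h4 : μ (Function.update v j a) = 0 :=
            h2 _ ⟨j, Function.update_self j a v⟩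
          have h3 : μ v = μ (Function.update v j (y j)) +
              c j • μ (Function.update v j a) := by
            conv_lhs => rw [← h5, hx]
            rw [μ.map_update_add, μ.map_update_smul]
          rw [hupd, ← ih, h3, h4, smul_zero, add_zero]
      simpa using (step Finset.univ).symm
    refine ⟨((LinearMap.snd k U k).comp e.toLinearMap).compMultilinearMap
      (μ.compLinearMap fun _ => U.subtype), e, ?_⟩
    intro x
    set u : Fin n → U := fun i => (e (x i)).1 with hu
    have hxi : ∀ i, x i = ↑(u i) + (e (x i)).2 • a := by
      intro i
      have h := esymm (u i) (e (x i)).2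
      rw [← h]
      show x i = E (E.symm (x i))
      rw [E.apply_symm_apply]
    have hmu : μ x = μ (fun i => ↑(u i)) := by
      apply key
      intro i
      rw [hxi i]
      simp only [add_sub_cancel_left]
      exact Submodule.smul_mem _ _ (Submodule.mem_span_singleton_self a)
    obtain ⟨c, hcμ⟩ := Submodule.mem_span_singleton.mp (h1 x)
    have heμ : e (μ x) = (0, c) := by
      have hEc : E (0, c) = μ x := by rw [esymm]; simpa using hcμ
      rw [he, ← hEc, LinearEquiv.symm_apply_apply]
    rw [heμ]
    have hfa : formAlg (((LinearMap.snd k U k).comp e.toLinearMap).compMultilinearMap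
        (μ.compLinearMap fun _ => U.subtype)) (fun i => e (x i)) =
        (0, (e (μ (fun i => ↑(u i)))).2) := rfl
    rw [hfa, ← hmu, heμ]
end

section
/- Let V be an m-dimensional vector space with basis e_1,...,e_m over an algebraically closed field, p a partition of n with p_m = 0, and μ an n-ary algebra structure on V such that μ(e_{φ(1)},...,e_{φ(n)}) = α_φ e_m for each map φ : {1,...,n} → {1,...,m}, where α_φ = 0 unless |φ^{-1}(i)| = p_i for all 1 ≤ i ≤ m−1. Suppose that for all 1 ≤ x < y ≤ m−1, all 1 ≤ k ≤ p_y, and all ψ : {1,...,n} → {1,...,m} with |ψ^{-1}(i)| = p_i for i ≠ x,y, |ψ^{-1}(x)| = p_x + k, |ψ^{-1}(y)| = p_y − k, one has Σ_{S ⊆ ψ^{-1}(x), |S| = k} α_{∂_S^y ψ} = 0. Then the structure constants of μ in the basis e_1,...,e_{x−1}, e_x + α e_y, e_{x+1},...,e_m coincide with those in e_1,...,e_m, for every 1 ≤ x < y ≤ m and every scalar α. -/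
/-- `cnt φ i = |φ⁻¹(i)|`: the number of arguments sent by `φ` to `i`. -/
def cnt {n m : ℕ} (φ : Fin n → Fin m) (i : Fin m) : ℕ :=
  (Finset.univ.filter fun t => φ t = i).card

/-- under the `p`-minimality equations, the structure constants of `μ` in
the basis `e_1,…,e_{x−1}, e_x + α e_y, e_{x+1},…,e_m` coincide with those in the basis
`e_1,…,e_m`.  (The dimension of `V` is `m + 1`, with top basis index `Fin.last m`.) -/
theorem structure_constants_invariant_of_p_minimal
    {𝕜 V : Type*} [Field 𝕜] [IsAlgClosed 𝕜] [AddCommGroup V] [Module 𝕜 V]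
    (n m : ℕ) (hn : 2 ≤ n) (e : Module.Basis (Fin (m + 1)) 𝕜 V)
    (μ : MultilinearMap 𝕜 (fun _ : Fin n => V) V)
    (p : Fin (m + 1) → ℕ)
    (hpmono : ∀ i j : Fin (m + 1), i ≤ j → p j ≤ p i)
    (hpsum : ∑ i, p i = n) (hpm : p (Fin.last m) = 0)
    (αf : (Fin n → Fin (m + 1)) → 𝕜)
    (hμ : ∀ φ : Fin n → Fin (m + 1), μ (fun t => e (φ t)) = αf φ • e (Fin.last m))
    (hα : ∀ φ : Fin n → Fin (m + 1),
      (∃ i : Fin (m + 1), i ≠ Fin.last m ∧ cnt φ i ≠ p i) → αf φ = 0)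
    (hmin : ∀ x y : Fin (m + 1), x < y → y ≠ Fin.last m → ∀ K : ℕ, 1 ≤ K → K ≤ p y →
      ∀ ψ : Fin n → Fin (m + 1), (∀ i, i ≠ x → i ≠ y → cnt ψ i = p i) →
        cnt ψ x = p x + K → cnt ψ y + K = p y →
        (∑ S ∈ Finset.powersetCard K (Finset.univ.filter fun t => ψ t = x),
          αf fun t => if t ∈ S then y else ψ t) = 0) :
    ∀ x y : Fin (m + 1), x < y → ∀ α : 𝕜, ∀ ψ : Fin n → Fin (m + 1),
      μ (fun t => (fun i => if i = x then e x + α • e y else e i) (ψ t)) =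
        αf ψ • (fun i => if i = x then e x + α • e y else e i) (Fin.last m) := by
  classical
  intro x y hxy α ψ
  have hxlast : x ≠ Fin.last m := ne_of_lt (lt_of_lt_of_le hxy (Fin.le_last y))
  have hxy' : x ≠ y := ne_of_lt hxy
  set T : Finset (Fin n) := Finset.univ.filter (fun t => ψ t = x) with hTdef
  -- total count is n
  have hsumcnt : ∀ φ : Fin n → Fin (m + 1), ∑ i, cnt φ i = n := by
    intro φ
    have := Finset.card_eq_sum_card_fiberwise
      (f := φ) (s := (Finset.univ : Finset (Fin n))) (t := Finset.univ)
      (fun t _ => Finset.mem_univ _)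
    simpa [cnt, Finset.card_univ] using this.symm
  -- fiber counting lemmas
  have fib : ∀ (j : ℕ) (s : Finset (Fin n)), s ∈ Finset.powersetCard j T →
      cnt (fun t => if t ∈ s then y else ψ t) x + j = cnt ψ x ∧
      cnt (fun t => if t ∈ s then y else ψ t) y = cnt ψ y + j ∧
      ∀ i, i ≠ x → i ≠ y → cnt (fun t => if t ∈ s then y else ψ t) i = cnt ψ i := by
    intro j s hs
    obtain ⟨hsub, hcard⟩ := Finset.mem_powersetCard.mp hs
    have hmem : ∀ t ∈ s, ψ t = x := fun t ht => (Finset.mem_filter.mp (hsub ht)).2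
    refine ⟨?_, ?_, ?_⟩
    · have hset : (Finset.univ.filter fun t => (if t ∈ s then y else ψ t) = x) = T \ s := by
        ext t
        simp only [Finset.mem_filter, Finset.mem_univ, true_and, Finset.mem_sdiff, hTdef]
        by_cases ht : t ∈ s
        · simp [ht, hxy'.symm, Ne.symm hxy']
        · simp [ht]
      rw [cnt, hset, ← hcard]
      exact Finset.card_sdiff_add_card_eq_card hsub
    · have hset : (Finset.univ.filter fun t => (if t ∈ s then y else ψ t) = y) =
          (Finset.univ.filter fun t => ψ t = y) ∪ s := by
        ext t
        simp only [Finset.mem_filter, Finset.mem_univ, true_and, Finset.mem_union]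
        by_cases ht : t ∈ s
        · simp [ht]
        · simp [ht]
      have hdisj : Disjoint (Finset.univ.filter fun t => ψ t = y) s := by
        rw [Finset.disjoint_left]
        intro t ht hts
        exact hxy' ((hmem t hts).symm.trans (Finset.mem_filter.mp ht).2)
      rw [cnt, hset, Finset.card_union_of_disjoint hdisj, cnt, hcard]
    · intro i hix hiy
      rw [cnt, cnt]
      congr 1
      apply Finset.filter_congr
      intro t _
      by_cases ht : t ∈ s
      · rw [if_pos ht, hmem t ht]
        exact iff_of_false (fun h => hiy h.symm) (fun h => hix h.symm)
      · rw [if_neg ht]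
  -- the key vanishing of grouped sums, for j ≥ 1
  have main : ∀ j : ℕ, 1 ≤ j →
      ∑ s ∈ Finset.powersetCard j T, αf (fun t => if t ∈ s then y else ψ t) = 0 := by
    intro j hj
    by_cases hylast : y = Fin.last m
    · subst hylast
      apply Finset.sum_eq_zero
      intro s hs
      apply hα
      by_contra hcon
      push_neg at hcon
      obtain ⟨hsub, hcard⟩ := Finset.mem_powersetCard.mp hs
      obtain ⟨t, ht⟩ : s.Nonempty := Finset.card_pos.mp (by omega)
      have h1 : 1 ≤ cnt (fun t => if t ∈ s then Fin.last m else ψ t) (Fin.last m) := by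
        rw [cnt]
        refine Finset.card_pos.mpr ⟨t, ?_⟩
        simp [ht]
      have h2 := hsumcnt (fun t => if t ∈ s then Fin.last m else ψ t)
      have h3 : ∑ i ∈ Finset.univ.erase (Fin.last m),
          cnt (fun t => if t ∈ s then Fin.last m else ψ t) i
          = ∑ i ∈ Finset.univ.erase (Fin.last m), p i :=
        Finset.sum_congr rfl (fun i hi => hcon i (Finset.ne_of_mem_erase hi))
      have h4 := Finset.add_sum_erase Finset.univ
        (cnt (fun t => if t ∈ s then Fin.last m else ψ t)) (Finset.mem_univ (Fin.last m))
      have h5 := Finset.add_sum_erase Finset.univ p (Finset.mem_univ (Fin.last m))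
      rw [hpsum] at h5
      rw [h2] at h4
      omega
    · by_cases hb : ∀ i, i ≠ x → i ≠ y → i ≠ Fin.last m → cnt ψ i = p i
      · by_cases hxk : cnt ψ x = p x + j
        · by_cases hyk : cnt ψ y + j = p y
          · -- apply hmin; first deduce cnt ψ last = 0
            have hylx : y ≠ x := Ne.symm hxy'
            have hlx : Fin.last m ≠ x := Ne.symm hxlast
            have hly : Fin.last m ≠ y := Ne.symm hylast
            have decomp : ∀ f : Fin (m + 1) → ℕ, ∑ i, f i =
                f x + (f y + (f (Fin.last m) +
                  ∑ i ∈ (((Finset.univ.erase x).erase y).erase (Fin.last m)), f i)) := by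
              intro f
              rw [← Finset.add_sum_erase _ f (Finset.mem_univ x)]
              rw [← Finset.add_sum_erase _ f
                (Finset.mem_erase.mpr ⟨hylx, Finset.mem_univ y⟩)]
              rw [← Finset.add_sum_erase _ f
                (Finset.mem_erase.mpr ⟨hly, Finset.mem_erase.mpr ⟨hlx, Finset.mem_univ _⟩⟩)]
            have hB : ∑ i ∈ (((Finset.univ.erase x).erase y).erase (Fin.last m)), cnt ψ i
                = ∑ i ∈ (((Finset.univ.erase x).erase y).erase (Fin.last m)), p i := by
              refine Finset.sum_congr rfl (fun i hi => ?_)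
              have hil := Finset.ne_of_mem_erase hi
              have hiy := Finset.ne_of_mem_erase (Finset.mem_of_mem_erase hi)
              have hix := Finset.ne_of_mem_erase
                (Finset.mem_of_mem_erase (Finset.mem_of_mem_erase hi))
              exact hb i hix hiy hil
            have d1 := decomp (cnt ψ)
            have d2 := decomp p
            rw [hsumcnt ψ, hB] at d1
            rw [hpsum, hpm] at d2
            have hlast0 : cnt ψ (Fin.last m) = 0 := by omega
            refine hmin x y hxy hylast j hj (by omega) ψ ?_ hxk hyk
            intro i hix hiy
            by_cases hil : i = Fin.last m
            · rw [hil, hlast0, hpm]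
            · exact hb i hix hiy hil
          · apply Finset.sum_eq_zero
            intro s hs
            apply hα
            exact ⟨y, hylast, by rw [(fib j s hs).2.1]; exact fun h => hyk (by omega)⟩
        · apply Finset.sum_eq_zero
          intro s hs
          apply hα
          refine ⟨x, hxlast, fun h => hxk ?_⟩
          have := (fib j s hs).1
          omega
      · push_neg at hb
        obtain ⟨i, hix, hiy, hil, hne⟩ := hb
        apply Finset.sum_eq_zero
        intro s hs
        apply hα
        exact ⟨i, hil, by rw [(fib j s hs).2.2 i hix hiy]; exact hne⟩
  -- now expand μ multilinearly
  have hrhs : (fun i => if i = x then e x + α • e y else e i) (Fin.last m) = e (Fin.last m) := by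
    simp only [if_neg (Ne.symm hxlast)]
  rw [hrhs]
  have harg : (fun t => (fun i => if i = x then e x + α • e y else e i) (ψ t)) =
      (fun t => if ψ t = x then α • e y else (0 : V)) + (fun t => e (ψ t)) := by
    funext t
    by_cases h : ψ t = x
    · simp [h, add_comm]
    · simp [h]
  rw [harg, μ.map_add_univ]
  have hterm : ∀ s : Finset (Fin n),
      μ (s.piecewise (fun t => if ψ t = x then α • e y else (0 : V)) (fun t => e (ψ t))) =
      if s ⊆ T then (α ^ s.card * αf (fun t => if t ∈ s then y else ψ t)) • e (Fin.last m)
        else 0 := by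
    intro s
    by_cases hsub : s ⊆ T
    · rw [if_pos hsub]
      have hpw : s.piecewise (fun t => if ψ t = x then α • e y else (0 : V))
            (fun t => e (ψ t)) =
          s.piecewise (fun t => α • e ((fun t => if t ∈ s then y else ψ t) t))
            (fun t => e ((fun t => if t ∈ s then y else ψ t) t)) := by
        funext t
        by_cases ht : t ∈ s
        · have hx := (Finset.mem_filter.mp (hsub ht)).2
          simp [Finset.piecewise, ht, hx]
        · simp [Finset.piecewise, ht]
      rw [hpw, μ.map_piecewise_smul, hμ]
      rw [Finset.prod_const, smul_smul]
    · rw [if_neg hsub]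
      obtain ⟨t, hts, htT⟩ := Finset.not_subset.mp hsub
      refine μ.map_coord_zero t ?_
      have hne : ¬ ψ t = x := fun h => htT (Finset.mem_filter.mpr ⟨Finset.mem_univ t, h⟩)
      simp [Finset.piecewise, hts, hne]
  rw [Finset.sum_congr rfl (fun s _ => hterm s)]
  have hps : (∑ s : Finset (Fin n),
      if s ⊆ T then (α ^ s.card * αf (fun t => if t ∈ s then y else ψ t)) • e (Fin.last m)
        else 0)
      = ∑ s ∈ T.powerset,
          (α ^ s.card * αf (fun t => if t ∈ s then y else ψ t)) • e (Fin.last m) := by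
    rw [← Finset.sum_filter]
    apply Finset.sum_congr _ (fun _ _ => rfl)
    ext s
    simp [Finset.mem_powerset]
  rw [hps, Finset.sum_powerset]
  have hinner : ∀ j ∈ Finset.range (T.card + 1),
      (∑ s ∈ Finset.powersetCard j T,
        (α ^ s.card * αf (fun t => if t ∈ s then y else ψ t)) • e (Fin.last m))
      = if j = 0 then αf ψ • e (Fin.last m) else 0 := by
    intro j _
    rcases Nat.eq_zero_or_pos j with h0 | h1
    · subst h0
      rw [if_pos rfl, Finset.powersetCard_zero, Finset.sum_singleton]
      simp
    · rw [if_neg (by omega)]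
      have hcc : ∀ s ∈ Finset.powersetCard j T,
          (α ^ s.card * αf (fun t => if t ∈ s then y else ψ t)) • e (Fin.last m)
          = (α ^ j * αf (fun t => if t ∈ s then y else ψ t)) • e (Fin.last m) := by
        intro s hs
        rw [(Finset.mem_powersetCard.mp hs).2]
      rw [Finset.sum_congr rfl hcc, ← Finset.sum_smul, ← Finset.mul_sum, main j h1,
        mul_zero, zero_smul]
  rw [Finset.sum_congr rfl hinner, Finset.sum_ite_eq' (Finset.range (T.card + 1)) 0
    (fun _ => αf ψ • e (Fin.last m))]
  simp
end

section
/- Let A be an m-dimensional p-attractive n-ary algebra, where p is a partition of n−1 with p_{m+1} = 0. Suppose for some 1 ≤ k ≤ m and some basis b_1,...,b_m of A: (i) [b_{ψ(1)},...,b_{ψ(n)}] = 0 whenever |ψ^{-1}(i)| < p_i for some 1 ≤ i ≤ k−1; and (ii) [b_{ψ(1)},...,b_{ψ(n)}] ∈ span(b_j) whenever |ψ^{-1}(i)| = p_i for 1 ≤ i ≤ j−1 and |ψ^{-1}(j)| > p_j for some 1 ≤ j ≤ k. Then [b_{φ(1)},...,b_{φ(n)}] = 0 for every φ : {1,...,n}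 → {1,...,m} with |φ^{-1}({1,...,k})| ≥ p_1 + ... + p_k + 2. -/
noncomputable def chi {k V : Type*} [Field k] [AddCommGroup V] [Module k V] {n : ℕ}
    (W : Submodule k V) (a : Fin n → V) : ℕ :=
  Nat.card {i : Fin n // a i ∈ W}

def PAttractive {k V : Type*} [Field k] [AddCommGroup V] [Module k V] {n : ℕ}
    (μ : MultilinearMap k (fun _ : Fin n => V) V) (p : ℕ → ℕ) : Prop :=
  ∀ (K : ℕ) (A : Fin (K + 1) → Submodule k V), Monotone A →
    (∀ r : Fin (K + 1), Module.finrank k (A r) = (r : ℕ) + 1) →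
    ∀ a : Fin n → V,
      (∀ r : Fin (K + 1), (r : ℕ) < K → chi (A r) a = ∑ i ∈ Finset.Icc 1 ((r : ℕ) + 1), p i) →
      (∑ i ∈ Finset.Icc 1 (K + 1), p i) < chi (A (Fin.last K)) a →
      μ a ∈ A (Fin.last K)

/-- `cntN ψ i = |ψ⁻¹(i)|`, where basis indices `Fin m` are numbered `1,…,m`. -/
def cntN {n m : ℕ} (ψ : Fin n → Fin m) (i : ℕ) : ℕ :=
  (Finset.univ.filter fun t => (ψ t : ℕ) + 1 = i).card

section Helpers

variable {𝕜 V : Type*} [Field 𝕜] [AddCommGroup V] [Module 𝕜 V] {m n : ℕ}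

lemma count_sum (φ : Fin n → Fin m) (N : ℕ) :
    (Finset.univ.filter fun t => (φ t : ℕ) < N).card = ∑ i ∈ Finset.Icc 1 N, cntN φ i := by
  classical
  rw [Finset.card_eq_sum_card_fiberwise
    (f := fun t => (φ t : ℕ) + 1) (t := Finset.Icc 1 N)
    (by intro t ht; simp at ht ⊢; omega)]
  refine Finset.sum_congr rfl fun i hi => ?_
  simp only [Finset.mem_Icc] at hi
  unfold cntN
  congr 1
  ext t
  simp only [Finset.mem_filter, Finset.mem_univ, true_and]
  constructor
  · exact fun h => h.2
  · intro h; exact ⟨by omega, h⟩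

lemma cntN_update_ne (φ : Fin n → Fin m) (t₀ : Fin n) (x : Fin m) (i : ℕ)
    (h1 : i ≠ (φ t₀ : ℕ) + 1) (h2 : i ≠ (x : ℕ) + 1) :
    cntN (Function.update φ t₀ x) i = cntN φ i := by
  classical
  unfold cntN
  congr 1
  ext t
  simp only [Finset.mem_filter, Finset.mem_univ, true_and, Function.update_apply]
  by_cases ht : t = t₀
  · subst ht
    simp only [if_pos rfl, if_true]
    omega
  · simp [ht]

lemma cntN_update_self (φ : Fin n → Fin m) (t₀ : Fin n) (x : Fin m) (hx : x ≠ φ t₀) :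
    cntN φ ((φ t₀ : ℕ) + 1) = cntN (Function.update φ t₀ x) ((φ t₀ : ℕ) + 1) + 1 := by
  classical
  unfold cntN
  have hmem : t₀ ∉ Finset.univ.filter
      fun t => ((Function.update φ t₀ x t : ℕ)) + 1 = (φ t₀ : ℕ) + 1 := by
    simp only [Finset.mem_filter, Finset.mem_univ, true_and, Function.update_self]
    intro h
    exact hx (Fin.ext (by omega))
  have : (Finset.univ.filter fun t => (φ t : ℕ) + 1 = (φ t₀ : ℕ) + 1)
      = insert t₀ (Finset.univ.filter
          fun t => ((Function.update φ t₀ x t : ℕ)) + 1 = (φ t₀ : ℕ) + 1) := by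
    ext t
    simp only [Finset.mem_insert, Finset.mem_filter, Finset.mem_univ, true_and,
      Function.update_apply]
    by_cases ht : t = t₀
    · simp [ht]
    · simp [ht]
  rw [this, Finset.card_insert_of_notMem hmem]

lemma mem_span_castLE (c : Module.Basis (Fin m) 𝕜 V) {N : ℕ} (hN : N ≤ m) (v : V) :
    v ∈ Submodule.span 𝕜 (Set.range fun i : Fin N => c (Fin.castLE hN i)) ↔
      ∀ x : Fin m, N ≤ (x : ℕ) → c.repr v x = 0 := by
  have hrange : (Set.range fun i : Fin N => c (Fin.castLE hN i))
      = c '' {x : Fin m | (x : ℕ) < N} := by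
    ext y
    constructor
    · rintro ⟨i, rfl⟩; exact ⟨Fin.castLE hN i, i.isLt, rfl⟩
    · rintro ⟨x, hx, rfl⟩; exact ⟨⟨(x : ℕ), hx⟩, by congr⟩
  rw [hrange, Module.Basis.mem_span_image]
  constructor
  · intro h x hx
    by_contra h0
    have := h (Finsupp.mem_support_iff.2 h0)
    simp only [Set.mem_setOf_eq] at this
    omega
  · intro h y hy
    simp only [Finset.mem_coe, Finsupp.mem_support_iff] at hy
    simp only [Set.mem_setOf_eq]
    by_contra h0
    exact hy (h y (by omega))

lemma basis_mem_span_castLE (c : Module.Basis (Fin m) 𝕜 V) {N : ℕ} (hN : N ≤ m) (x : Fin m) :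
    c x ∈ Submodule.span 𝕜 (Set.range fun i : Fin N => c (Fin.castLE hN i)) ↔ (x : ℕ) < N := by
  rw [mem_span_castLE c hN]
  constructor
  · intro h
    by_contra h0
    have := h x (by omega)
    simp [Module.Basis.repr_self] at this
  · intro h y hy
    rw [Module.Basis.repr_self]
    apply Finsupp.single_eq_of_ne
    intro hxy
    subst hxy
    omega

lemma finrank_span_castLE (c : Module.Basis (Fin m) 𝕜 V) {N : ℕ} (hN : N ≤ m) :
    Module.finrank 𝕜 (Submodule.span 𝕜 (Set.range fun i : Fin N => c (Fin.castLE hN i))) = N := by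
  have h' : LinearIndependent 𝕜 (fun i : Fin N => c (Fin.castLE hN i)) :=
    c.linearIndependent.comp _ (Fin.castLE_injective hN)
  rw [finrank_span_eq_card h', Fintype.card_fin]

lemma chi_span_castLE (c : Module.Basis (Fin m) 𝕜 V) {N : ℕ} (hN : N ≤ m) (φ : Fin n → Fin m) :
    chi (Submodule.span 𝕜 (Set.range fun i : Fin N => c (Fin.castLE hN i))) (fun t => c (φ t))
      = (Finset.univ.filter fun t => (φ t : ℕ) < N).card := by
  classical
  unfold chi
  rw [Nat.card_congr (Equiv.subtypeEquivRight
    (fun t => basis_mem_span_castLE c hN (φ t)))]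
  rw [Nat.card_eq_fintype_card, Fintype.card_subtype]

end Helpers

/-- Lemma on `p`-attractive algebras: under hypotheses (i) and (ii) for a
basis `b_1,…,b_m`, any product whose arguments hit `{b_1,…,b_K}` at least
`p_1 + ⋯ + p_K + 2` times vanishes. -/
theorem pattractive_vanishing
    {𝕜 V : Type*} [Field 𝕜] [IsAlgClosed 𝕜] [AddCommGroup V] [Module 𝕜 V]
    (n m : ℕ) (hn : 2 ≤ n) (hm : 1 ≤ m)
    (μ : MultilinearMap 𝕜 (fun _ : Fin n => V) V)
    (p : ℕ → ℕ)
    (hpmono : ∀ i j : ℕ, 1 ≤ i → i ≤ j → p j ≤ p i)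
    (hpsum : (∑ i ∈ Finset.Icc 1 m, p i) = n - 1)
    (hpm1 : p (m + 1) = 0)
    (hatt : PAttractive μ p)
    (b : Module.Basis (Fin m) 𝕜 V)
    (K : ℕ) (hK1 : 1 ≤ K) (hKm : K ≤ m)
    (h1 : ∀ ψ : Fin n → Fin m,
      (∃ i : ℕ, 1 ≤ i ∧ i ≤ K - 1 ∧ cntN ψ i < p i) → μ (fun t => b (ψ t)) = 0)
    (h2 : ∀ (ψ : Fin n → Fin m) (j : ℕ) (hj1 : 1 ≤ j) (hjK : j ≤ K),
      (∀ i : ℕ, 1 ≤ i → i ≤ j - 1 → cntN ψ i = p i) → p j < cntN ψ j →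
      μ (fun t => b (ψ t)) ∈ Submodule.span 𝕜 {b ⟨j - 1, by omega⟩}) :
    ∀ φ : Fin n → Fin m,
      (∑ i ∈ Finset.Icc 1 K, p i) + 2 ≤ (Finset.univ.filter fun t => (φ t : ℕ) + 1 ≤ K).card →
      μ (fun t => b (φ t)) = 0 := by
  classical
  intro φ hcard
  have hfilter : (Finset.univ.filter fun t => (φ t : ℕ) + 1 ≤ K)
      = (Finset.univ.filter fun t => (φ t : ℕ) < K) := by
    apply Finset.filter_congr
    intro t _
    omega
  rw [hfilter, count_sum] at hcard
  -- hcard : (∑ i ∈ Icc 1 K, p i) + 2 ≤ ∑ i ∈ Icc 1 K, cntN φ i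
  have hKm' : K < m := by
    rcases eq_or_lt_of_le hKm with h | h
    · exfalso
      have hle : ∑ i ∈ Finset.Icc 1 K, cntN φ i ≤ n := by
        rw [← count_sum]
        calc (Finset.univ.filter fun t => (φ t : ℕ) < K).card
            ≤ (Finset.univ : Finset (Fin n)).card := Finset.card_filter_le _ _
          _ = n := by simp
      rw [h] at hcard hle
      rw [hpsum] at hcard
      omega
    · exact h
  -- Case A
  by_cases hA : ∃ i : ℕ, 1 ≤ i ∧ i ≤ K - 1 ∧ cntN φ i < p i
  · exact h1 φ hA
  push_neg at hA
  -- minimal j with excess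
  have hex : ∃ i, 1 ≤ i ∧ i ≤ K ∧ p i < cntN φ i := by
    by_contra hno
    push_neg at hno
    have : ∑ i ∈ Finset.Icc 1 K, cntN φ i ≤ ∑ i ∈ Finset.Icc 1 K, p i := by
      apply Finset.sum_le_sum
      intro i hi
      simp only [Finset.mem_Icc] at hi
      exact hno i hi.1 hi.2
    omega
  have hkey : ∃ j, 1 ≤ j ∧ j ≤ K ∧ p j < cntN φ j ∧
      (∀ i, 1 ≤ i → i ≤ j - 1 → cntN φ i = p i) := by
    refine ⟨Nat.find hex, (Nat.find_spec hex).1, (Nat.find_spec hex).2.1,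
      (Nat.find_spec hex).2.2, ?_⟩
    intro i h1i hi
    have hmin := Nat.find_min hex (show i < Nat.find hex by omega)
    have hge : p i ≤ cntN φ i := hA i h1i (by
      have := (Nat.find_spec hex).2.1
      omega)
    by_contra hne
    exact hmin ⟨h1i, by have := (Nat.find_spec hex).2.1; omega, by omega⟩
  obtain ⟨j, hj1, hjK, hjgt, heqb⟩ := hkey
  obtain ⟨J, rfl⟩ : ∃ J, j = J + 1 := ⟨j - 1, by omega⟩
  simp only [Nat.add_sub_cancel] at heqb
  -- heqb : ∀ i, 1 ≤ i → i ≤ J → cntN φ i = p i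
  set jIdx : Fin m := ⟨J, by omega⟩ with hjIdx
  set lIdx : Fin m := ⟨K, hKm'⟩ with hlIdx
  have hjl : jIdx ≠ lIdx := by
    simp only [hjIdx, hlIdx, Fin.mk.injEq, ne_eq]
    omega
  set a : Fin n → V := fun t => b (φ t) with ha
  set w : Fin n → V := fun _ => b lIdx with hw
  set T : Finset (Fin n) := Finset.univ.filter (fun t => φ t = jIdx) with hT
  set u : Finset (Fin n) → V := fun s => μ (s.piecewise w a) with hu
  -- coordinates of singleton terms vanish
  have hjval : (jIdx : ℕ) = J := by rw [hjIdx]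
  have hlval : (lIdx : ℕ) = K := by rw [hlIdx]
  have hsingle : ∀ t ∈ T, b.repr (u {t}) lIdx = 0 := by
    intro t ht
    have hφt : φ t = jIdx := (Finset.mem_filter.1 ht).2
    set ψ : Fin n → Fin m := Function.update φ t lIdx with hψ
    have hupd : u {t} = μ (fun t' => b (ψ t')) := by
      simp only [hu]
      congr 1
      funext t'
      rw [Finset.piecewise_singleton]
      by_cases h : t' = t
      · subst h
        simp only [Function.update_self, hψ, hw]
      · rw [Function.update_of_ne h, hψ, Function.update_of_ne h, ha]
    have hc_ne : ∀ i, i ≠ J + 1 → i ≠ K + 1 → cntN ψ i = cntN φ i := by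
      intro i hi1 hi2
      apply cntN_update_ne
      · rw [hφt, hjval]; exact hi1
      · rw [hlval]; exact hi2
    have hc_j : cntN φ (J + 1) = cntN ψ (J + 1) + 1 := by
      have h := cntN_update_self φ t lIdx (by rw [hφt]; exact Ne.symm hjl)
      rw [hφt, hjval] at h
      exact h
    have hsumψ : ∑ i ∈ Finset.Icc 1 K, cntN φ i
        = (∑ i ∈ Finset.Icc 1 K, cntN ψ i) + 1 := by
      have step : ∀ i ∈ Finset.Icc 1 K, cntN φ i
          = cntN ψ i + (if i = J + 1 then 1 else 0) := by
        intro i hi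
        simp only [Finset.mem_Icc] at hi
        by_cases hij : i = J + 1
        · rw [if_pos hij, hij]; exact hc_j
        · rw [if_neg hij, add_zero]; exact (hc_ne i hij (by omega)).symm
      rw [Finset.sum_congr rfl step, Finset.sum_add_distrib,
        Finset.sum_ite_eq' (Finset.Icc 1 K) (J + 1) (fun _ => 1)]
      rw [if_pos (by simp only [Finset.mem_Icc]; omega)]
    have hexψ : ∃ i, 1 ≤ i ∧ i ≤ K ∧ p i < cntN ψ i := by
      by_contra hno
      push_neg at hno
      have : ∑ i ∈ Finset.Icc 1 K, cntN ψ i ≤ ∑ i ∈ Finset.Icc 1 K, p i :=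
        Finset.sum_le_sum (fun i hi => by
          simp only [Finset.mem_Icc] at hi; exact hno i hi.1 hi.2)
      omega
    have hkey2 : ∃ j₂, 1 ≤ j₂ ∧ j₂ ≤ K ∧ p j₂ < cntN ψ j₂ ∧
        (∀ i, 1 ≤ i → i ≤ j₂ - 1 → cntN ψ i = p i) := by
      refine ⟨Nat.find hexψ, (Nat.find_spec hexψ).1, (Nat.find_spec hexψ).2.1,
        (Nat.find_spec hexψ).2.2, ?_⟩
      intro i h1i hi
      have hKf := (Nat.find_spec hexψ).2.1
      have hmin := Nat.find_min hexψ (show i < Nat.find hexψ by omega)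
      have hle2 : cntN ψ i ≤ p i := by
        by_contra hgt2
        push_neg at hgt2
        exact hmin ⟨h1i, by omega, hgt2⟩
      have hge2 : p i ≤ cntN ψ i := by
        by_cases hij : i = J + 1
        · subst hij; omega
        · rw [hc_ne i hij (by omega)]
          exact hA i h1i (by omega)
      omega
    obtain ⟨j₂, hj₂1, hj₂K, hj₂gt, heq₂⟩ := hkey2
    have hmem := h2 ψ j₂ hj₂1 hj₂K heq₂ hj₂gt
    obtain ⟨cc, hcc⟩ := Submodule.mem_span_singleton.1 hmem
    rw [hupd, ← hcc, map_smul, Finsupp.smul_apply, Module.Basis.repr_self]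
    rw [Finsupp.single_eq_of_ne, smul_zero]
    simp only [ne_eq, Fin.mk.injEq, hlIdx]
    omega
  -- main identity
  have key : ∀ lam : 𝕜,
      (∑ s ∈ T.powerset, b.repr (u s) lIdx * lam ^ s.card)
        = lam * ∑ s ∈ T.powerset, b.repr (u s) jIdx * lam ^ s.card := by
    intro lam
    set D : V →ₗ[𝕜] V := lam • ((b.coord jIdx).smulRight (b lIdx)) with hD
    have hDval : ∀ v, D v = (lam * b.repr v jIdx) • b lIdx := by
      intro v
      simp only [hD, LinearMap.smul_apply, LinearMap.smulRight_apply, Module.Basis.coord_apply,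
        smul_smul]
    have hD_bl : D (b lIdx) = 0 := by
      rw [hDval, Module.Basis.repr_self, Finsupp.single_eq_of_ne hjl, mul_zero, zero_smul]
    have hDD : ∀ v, D (D v) = 0 := by
      intro v
      rw [hDval v, map_smul, hD_bl, smul_zero]
    have hfg : (LinearMap.id + D).comp (LinearMap.id - D) = LinearMap.id := by
      ext v
      simp only [LinearMap.coe_comp, Function.comp_apply, LinearMap.add_apply,
        LinearMap.sub_apply, LinearMap.id_coe, id_eq]
      rw [map_sub, hDD, sub_zero]
      abel
    have hgf : (LinearMap.id - D).comp (LinearMap.id + D) = LinearMap.id := by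
      ext v
      simp only [LinearMap.coe_comp, Function.comp_apply, LinearMap.add_apply,
        LinearMap.sub_apply, LinearMap.id_coe, id_eq]
      rw [map_add, hDD, add_zero]
      abel
    set e : V ≃ₗ[𝕜] V := LinearEquiv.ofLinear (LinearMap.id + D) (LinearMap.id - D) hfg hgf
      with he
    set b' : Module.Basis (Fin m) 𝕜 V := b.map e with hb'
    have hb'val : ∀ i, b' i = b i + (lam * b.repr (b i) jIdx) • b lIdx := by
      intro i
      rw [hb', Module.Basis.map_apply, he, LinearEquiv.ofLinear_apply, LinearMap.add_apply,
        LinearMap.id_apply, hDval]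
    have hrepr' : ∀ v : V, b'.repr v lIdx = b.repr v lIdx - lam * b.repr v jIdx := by
      intro v
      rw [hb']
      simp only [Module.Basis.map_repr, LinearEquiv.trans_apply]
      rw [he]
      simp only [LinearEquiv.ofLinear_symm_apply, LinearMap.sub_apply, LinearMap.id_apply]
      rw [map_sub, Finsupp.sub_apply]
      congr 1
      rw [hDval v, map_smul, Finsupp.smul_apply, Module.Basis.repr_self, Finsupp.single_eq_same,
        smul_eq_mul, mul_one]
    have hle : ∀ r : Fin (J + 1), (r : ℕ) + 1 ≤ m := fun r => by have := r.isLt; omega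
    have hchi : ∀ r : Fin (J + 1),
        chi (Submodule.span 𝕜
            (Set.range fun i : Fin ((r : ℕ) + 1) => b' (Fin.castLE (hle r) i)))
          (fun t => b' (φ t)) = ∑ i ∈ Finset.Icc 1 ((r : ℕ) + 1), cntN φ i := by
      intro r
      rw [chi_span_castLE b' (hle r) φ]
      exact count_sum φ _
    have hmem : (μ fun t => b' (φ t)) ∈ Submodule.span 𝕜
        (Set.range fun i : Fin (((Fin.last J : Fin (J + 1)) : ℕ) + 1) =>
          b' (Fin.castLE (hle (Fin.last J)) i)) := by
      refine hatt J (fun r : Fin (J + 1) => Submodule.span 𝕜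
          (Set.range fun i : Fin ((r : ℕ) + 1) => b' (Fin.castLE (hle r) i)))
        ?_ ?_ (fun t => b' (φ t)) ?_ ?_
      · intro r s hrs
        dsimp only
        apply Submodule.span_mono
        rintro x ⟨i, rfl⟩
        exact ⟨Fin.castLE (Nat.add_le_add_right (Fin.le_def.mp hrs) 1) i, rfl⟩
      · intro r
        exact finrank_span_castLE b' (hle r)
      · intro r hr
        rw [hchi r]
        refine Finset.sum_congr rfl fun i hi => ?_
        simp only [Finset.mem_Icc] at hi
        exact heqb i hi.1 (by omega)
      · rw [hchi (Fin.last J), Fin.val_last]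
        have e1 := Finset.sum_Icc_succ_top (show 1 ≤ J + 1 by omega) (cntN φ)
        have e2 := Finset.sum_Icc_succ_top (show 1 ≤ J + 1 by omega) p
        have e3 : ∑ i ∈ Finset.Icc 1 J, cntN φ i = ∑ i ∈ Finset.Icc 1 J, p i :=
          Finset.sum_congr rfl fun i hi => by
            simp only [Finset.mem_Icc] at hi
            exact heqb i hi.1 hi.2
        omega
    have h0 : b'.repr (μ fun t => b' (φ t)) lIdx = 0 := by
      refine (mem_span_castLE b' (hle (Fin.last J)) _).1 hmem lIdx ?_
      rw [Fin.val_last, hlval]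
      omega
    rw [hrepr'] at h0
    have h0' : b.repr (μ fun t => b' (φ t)) lIdx
        = lam * b.repr (μ fun t => b' (φ t)) jIdx := sub_eq_zero.mp h0
    have hb'φ : (fun t => b' (φ t)) = T.piecewise (lam • w + a) a := by
      funext t
      by_cases h : φ t = jIdx
      · have htT : t ∈ T := by simp only [hT, Finset.mem_filter, Finset.mem_univ, true_and]; exact h
        rw [Finset.piecewise_eq_of_mem _ _ _ htT, hb'val (φ t), h]
        simp only [Pi.add_apply, Pi.smul_apply, hw, ha, h, Module.Basis.repr_self,
          Finsupp.single_eq_same, mul_one]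
        exact add_comm _ _
      · have htT : t ∉ T := by simp only [hT, Finset.mem_filter, Finset.mem_univ, true_and]; exact h
        rw [Finset.piecewise_eq_of_notMem _ _ _ htT, hb'val (φ t)]
        simp only [ha, Module.Basis.repr_self, Finsupp.single_eq_of_ne (Ne.symm h), mul_zero, zero_smul,
          add_zero]
    have hexp : μ (fun t => b' (φ t)) = ∑ s ∈ T.powerset, lam ^ s.card • u s := by
      rw [hb'φ, μ.map_piecewise_add (lam • w) a T]
      refine Finset.sum_congr rfl fun s hs => ?_
      have hps : s.piecewise (lam • w) a
          = s.piecewise (fun i => lam • (s.piecewise w a) i) (s.piecewise w a) := by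
        funext t'
        by_cases h : t' ∈ s
        · simp [Finset.piecewise_eq_of_mem _ _ _ h]
        · simp [Finset.piecewise_eq_of_notMem _ _ _ h]
      rw [hps, μ.map_piecewise_smul (fun _ => lam) (s.piecewise w a) s, Finset.prod_const]
    have hcoord : ∀ x : Fin m, b.repr (μ fun t => b' (φ t)) x
        = ∑ s ∈ T.powerset, b.repr (u s) x * lam ^ s.card := by
      intro x
      rw [← Module.Basis.coord_apply, hexp, map_sum]
      refine Finset.sum_congr rfl fun s _ => ?_
      rw [map_smul, smul_eq_mul, Module.Basis.coord_apply, mul_comm]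
    rw [hcoord lIdx, hcoord jIdx] at h0'
    exact h0'
  -- polynomial extraction
  have hpoly : (∑ s ∈ T.powerset, Polynomial.C (b.repr (u s) lIdx) * Polynomial.X ^ s.card)
      = Polynomial.X *
        ∑ s ∈ T.powerset, Polynomial.C (b.repr (u s) jIdx) * Polynomial.X ^ s.card := by
    apply Polynomial.funext
    intro lam
    simp only [Polynomial.eval_finset_sum, Polynomial.eval_mul, Polynomial.eval_pow,
      Polynomial.eval_C, Polynomial.eval_X]
    exact key lam
  have hc1 := congrArg (fun q => Polynomial.coeff q 1) hpoly
  simp only [Polynomial.finset_sum_coeff, Polynomial.coeff_C_mul, Polynomial.coeff_X_pow,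
    Polynomial.coeff_X_mul] at hc1
  have hL : (∑ s ∈ T.powerset, b.repr (u s) lIdx * if (1 : ℕ) = s.card then 1 else 0)
      = 0 := by
    apply Finset.sum_eq_zero
    intro s hs
    by_cases hcs : s.card = 1
    · obtain ⟨t, rfl⟩ := Finset.card_eq_one.1 hcs
      have ht : t ∈ T := Finset.mem_powerset.1 hs (Finset.mem_singleton_self t)
      rw [hsingle t ht, zero_mul]
    · rw [if_neg (fun hh => hcs hh.symm), mul_zero]
  have hR : (∑ s ∈ T.powerset, b.repr (u s) jIdx * if (0 : ℕ) = s.card then 1 else 0)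
      = b.repr (u ∅) jIdx := by
    rw [Finset.sum_eq_single ∅]
    · simp
    · intro s hs hne
      rw [if_neg, mul_zero]
      intro hh
      exact hne (Finset.card_eq_zero.1 hh.symm)
    · intro hmem
      exact absurd (Finset.empty_mem_powerset T) hmem
  rw [hL] at hc1
  rw [hR] at hc1  -- 0 = b.repr (u ∅) jIdx
  have hspan := h2 φ (J + 1) (by omega) hjK heqb hjgt
  obtain ⟨cc, hcc⟩ := Submodule.mem_span_singleton.1 hspan
  rw [← ha] at hcc
  have hx : (⟨J + 1 - 1, by omega⟩ : Fin m) = jIdx := by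
    simp only [hjIdx, Fin.mk.injEq]
    omega
  rw [hx] at hcc
  have hu0 : u ∅ = μ a := by
    simp only [hu, Finset.piecewise_empty]
  rw [hu0, ← hcc] at hc1
  simp only [map_smul, Module.Basis.repr_self, Finsupp.smul_apply, Finsupp.single_eq_same,
    smul_eq_mul, mul_one] at hc1
  rw [← hcc, ← hc1, zero_smul]
end

section
/- Let n = 3, m ≥ 2, and fix scalars α_1, α_2, α_3 in a field k with α_1 + α_2 + α_3 = 0, not all zero. Let A be the ternary algebra with basis e_1,...,e_m and nonzero products [e_1,e_1,e_i] = α_3 e_i, [e_1,e_i,e_1] = α_2 e_i, [e_i,e_1,e_1] = α_1 e_i for 2 ≤ i ≤ m (all other products of basis vectors zero). Then A is subalgebraic: [a_1,a_2,a_3] ∈ span(a_1,a_2,a_3) for all a_1,a_2,a_3 ∈ A. -/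
def ternAux {𝕜 V : Type*} [Field 𝕜] [AddCommGroup V] [Module 𝕜 V]
    (x : V →ₗ[𝕜] 𝕜) (α₁ α₂ α₃ : 𝕜) : MultilinearMap 𝕜 (fun _ : Fin 3 => V) V where
  toFun a := (α₁ * x (a 1) * x (a 2)) • a 0 + (α₂ * x (a 0) * x (a 2)) • a 1
      + (α₃ * x (a 0) * x (a 1)) • a 2
  map_update_add' a i u v := by
    fin_cases i <;>
      simp [Function.update_apply, Fin.ext_iff, map_add, mul_add, add_mul, add_smul, smul_add] <;>
      module
  map_update_smul' a i c u := by
    fin_cases i <;>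
      simp [Function.update_apply, Fin.ext_iff, map_smul, smul_smul] <;>
      module

/-- the ternary algebra (of dimension `m + 2 ≥ 2`) with
`[e_1,e_1,e_i] = α_3 e_i`, `[e_1,e_i,e_1] = α_2 e_i`, `[e_i,e_1,e_1] = α_1 e_i`
(`i ≥ 2`), where `α_1 + α_2 + α_3 = 0` and not all `α_i` are zero, is subalgebraic. -/
theorem ternary_attractive_eps_zero_subalgebraic
    {𝕜 V : Type*} [Field 𝕜] [AddCommGroup V] [Module 𝕜 V]
    (m : ℕ) (e : Module.Basis (Fin (m + 2)) 𝕜 V)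
    (α₁ α₂ α₃ : 𝕜) (hsum : α₁ + α₂ + α₃ = 0) (hne : ¬ (α₁ = 0 ∧ α₂ = 0 ∧ α₃ = 0))
    (μ : MultilinearMap 𝕜 (fun _ : Fin 3 => V) V)
    (h3 : ∀ i : Fin (m + 2), i ≠ 0 → μ ![e 0, e 0, e i] = α₃ • e i)
    (h2 : ∀ i : Fin (m + 2), i ≠ 0 → μ ![e 0, e i, e 0] = α₂ • e i)
    (h1 : ∀ i : Fin (m + 2), i ≠ 0 → μ ![e i, e 0, e 0] = α₁ • e i)
    (h0 : ∀ φ : Fin 3 → Fin (m + 2),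
      (Finset.univ.filter fun t => φ t = 0).card ≠ 2 → μ (fun t => e (φ t)) = 0) :
    ∀ a : Fin 3 → V, μ a ∈ Submodule.span 𝕜 (Set.range a) := by
  have key : μ = ternAux (e.coord 0) α₁ α₂ α₃ := by
    apply Module.Basis.ext_multilinear (fun _ => e)
    intro v
    have hL : (fun t => e (v t)) = ![e (v 0), e (v 1), e (v 2)] := by
      funext t; fin_cases t <;> rfl
    have hcard : ∀ (p : Fin 3 → Prop) [DecidablePred p],
        (Finset.univ.filter p).card =
          (if p 0 then 1 else 0) + (if p 1 then 1 else 0) + (if p 2 then 1 else 0) := by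
      intro p _
      rw [Finset.card_filter, Fin.sum_univ_three]
    by_cases hv0 : v 0 = 0 <;> by_cases hv1 : v 1 = 0 <;> by_cases hv2 : v 2 = 0
    · -- all zero: card 3
      rw [h0 v (by rw [hcard]; simp [hv0, hv1, hv2])]
      simp [ternAux, hv0, hv1, hv2, Module.Basis.repr_self_apply, ← add_smul, hsum]
    · -- v2 ≠ 0
      rw [hL, hv0, hv1, h3 _ hv2]
      simp [ternAux, hv0, hv1, hv2, Module.Basis.repr_self_apply]
    · rw [hL, hv0, hv2, h2 _ hv1]
      simp [ternAux, hv0, hv1, hv2, Module.Basis.repr_self_apply]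
    · rw [h0 v (by rw [hcard]; simp [hv0, hv1, hv2])]
      simp [ternAux, hv0, hv1, hv2, Module.Basis.repr_self_apply]
    · rw [hL, hv1, hv2, h1 _ hv0]
      simp [ternAux, hv0, hv1, hv2, Module.Basis.repr_self_apply]
    · rw [h0 v (by rw [hcard]; simp [hv0, hv1, hv2])]
      simp [ternAux, hv0, hv1, hv2, Module.Basis.repr_self_apply]
    · rw [h0 v (by rw [hcard]; simp [hv0, hv1, hv2])]
      simp [ternAux, hv0, hv1, hv2, Module.Basis.repr_self_apply]
    · rw [h0 v (by rw [hcard]; simp [hv0, hv1, hv2])]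
      simp [ternAux, hv0, hv1, hv2, Module.Basis.repr_self_apply]
  intro a
  rw [key]
  show (_ : V) + _ + _ ∈ _
  refine Submodule.add_mem _ (Submodule.add_mem _ ?_ ?_) ?_ <;>
    exact Submodule.smul_mem _ _ (Submodule.subset_span ⟨_, rfl⟩)
end

section
/- Let n = 3, m ≥ 2, and fix scalars α_1, α_2, α_3 in a field k with α_1 + α_2 + α_3 = 1. Let A be the ternary algebra with basis e_1,...,e_m and nonzero products [e_1,e_1,e_1] = e_1, [e_1,e_1,e_i] = α_3 e_i, [e_1,e_i,e_1] = α_2 e_i, [e_i,e_1,e_1] = α_1 e_i for 2 ≤ i ≤ m. Then A is subalgebraic: [a_1,a_2,a_3] ∈ span(a_1,a_2,a_3) for all a_1,a_2,a_3 ∈ A. -/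
private def nuAux {𝕜 V : Type*} [Field 𝕜] [AddCommGroup V] [Module 𝕜 V]
    (α₁ α₂ α₃ : 𝕜) (ε : V →ₗ[𝕜] 𝕜) : MultilinearMap 𝕜 (fun _ : Fin 3 => V) V where
  toFun a := (α₁ * ε (a 1) * ε (a 2)) • a 0 + (α₂ * ε (a 0) * ε (a 2)) • a 1 +
      (α₃ * ε (a 0) * ε (a 1)) • a 2
  map_update_add' := by
    intro inst a i x y
    obtain rfl : inst = instDecidableEqFin 3 := Subsingleton.elim _ _
    fin_cases i <;> simp [Function.update_apply] <;> module
  map_update_smul' := by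
    intro inst a i c x
    obtain rfl : inst = instDecidableEqFin 3 := Subsingleton.elim _ _
    fin_cases i <;> simp [Function.update_apply] <;> module

private lemma nuAux_apply {𝕜 V : Type*} [Field 𝕜] [AddCommGroup V] [Module 𝕜 V]
    (α₁ α₂ α₃ : 𝕜) (ε : V →ₗ[𝕜] 𝕜) (a : Fin 3 → V) :
    nuAux α₁ α₂ α₃ ε a = (α₁ * ε (a 1) * ε (a 2)) • a 0 + (α₂ * ε (a 0) * ε (a 2)) • a 1 +
      (α₃ * ε (a 0) * ε (a 1)) • a 2 := rfl

/-- the ternary algebra (of dimension `m + 2 ≥ 2`) with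
`[e_1,e_1,e_1] = e_1`, `[e_1,e_1,e_i] = α_3 e_i`, `[e_1,e_i,e_1] = α_2 e_i`,
`[e_i,e_1,e_1] = α_1 e_i` (`i ≥ 2`), where `α_1 + α_2 + α_3 = 1`, is subalgebraic. -/
theorem ternary_attractive_eps_one_subalgebraic
    {𝕜 V : Type*} [Field 𝕜] [AddCommGroup V] [Module 𝕜 V]
    (m : ℕ) (e : Module.Basis (Fin (m + 2)) 𝕜 V)
    (α₁ α₂ α₃ : 𝕜) (hsum : α₁ + α₂ + α₃ = 1)
    (μ : MultilinearMap 𝕜 (fun _ : Fin 3 => V) V)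
    (h000 : μ ![e 0, e 0, e 0] = e 0)
    (h3 : ∀ i : Fin (m + 2), i ≠ 0 → μ ![e 0, e 0, e i] = α₃ • e i)
    (h2 : ∀ i : Fin (m + 2), i ≠ 0 → μ ![e 0, e i, e 0] = α₂ • e i)
    (h1 : ∀ i : Fin (m + 2), i ≠ 0 → μ ![e i, e 0, e 0] = α₁ • e i)
    (h0 : ∀ φ : Fin 3 → Fin (m + 2),
      (Finset.univ.filter fun t => φ t = 0).card ≤ 1 → μ (fun t => e (φ t)) = 0) :
    ∀ a : Fin 3 → V, μ a ∈ Submodule.span 𝕜 (Set.range a) := by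
  have hεe : ∀ j : Fin (m + 2), e.coord 0 (e j) = if j = 0 then 1 else 0 := by
    intro j
    simp [Module.Basis.coord_apply, Finsupp.single_apply, eq_comm]
  have card1 : ∀ v : Fin 3 → Fin (m + 2), ∀ t : Fin 3, (∀ s : Fin 3, v s = 0 → s = t) →
      (Finset.univ.filter fun s => v s = 0).card ≤ 1 := by
    intro v t h
    rw [Finset.card_le_one]
    intro a ha b hb
    simp only [Finset.mem_filter] at ha hb
    rw [h a ha.2, h b hb.2]
  have key : μ = nuAux α₁ α₂ α₃ (e.coord 0) := by
    refine Module.Basis.ext_multilinear (fun _ => e) ?_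
    intro v
    rw [show (fun i => e (v i)) = ![e (v 0), e (v 1), e (v 2)] by funext i; fin_cases i <;> rfl]
    by_cases hv0 : v 0 = 0 <;> by_cases hv1 : v 1 = 0 <;> by_cases hv2 : v 2 = 0
    · rw [hv0, hv1, hv2, h000, nuAux_apply]
      simp only [Matrix.cons_val_zero, Matrix.cons_val_one, Matrix.head_cons,
        Matrix.cons_val_two, Matrix.tail_cons, hεe]
      simp [← add_smul, hsum]
    · rw [hv0, hv1, h3 _ hv2, nuAux_apply]
      simp only [Matrix.cons_val_zero, Matrix.cons_val_one, Matrix.head_cons,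
        Matrix.cons_val_two, Matrix.tail_cons, hεe]
      simp [hv2]
    · rw [hv0, hv2, h2 _ hv1, nuAux_apply]
      simp only [Matrix.cons_val_zero, Matrix.cons_val_one, Matrix.head_cons,
        Matrix.cons_val_two, Matrix.tail_cons, hεe]
      simp [hv1]
    · rw [show (![e (v 0), e (v 1), e (v 2)] : Fin 3 → V) = fun i => e (v i) by
        funext i; fin_cases i <;> rfl]
      rw [h0 v (card1 v 0 ?_), nuAux_apply]
      · simp [hεe, hv1, hv2]
      · intro s hs; fin_cases s <;> simp_all
    · rw [hv1, hv2, h1 _ hv0, nuAux_apply]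
      simp only [Matrix.cons_val_zero, Matrix.cons_val_one, Matrix.head_cons,
        Matrix.cons_val_two, Matrix.tail_cons, hεe]
      simp [hv0]
    · rw [show (![e (v 0), e (v 1), e (v 2)] : Fin 3 → V) = fun i => e (v i) by
        funext i; fin_cases i <;> rfl]
      rw [h0 v (card1 v 1 ?_), nuAux_apply]
      · simp [hεe, hv0, hv2]
      · intro s hs; fin_cases s <;> simp_all
    · rw [show (![e (v 0), e (v 1), e (v 2)] : Fin 3 → V) = fun i => e (v i) by
        funext i; fin_cases i <;> rfl]
      rw [h0 v (card1 v 2 ?_), nuAux_apply]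
      · simp [hεe, hv0, hv1]
      · intro s hs; fin_cases s <;> simp_all
    · rw [show (![e (v 0), e (v 1), e (v 2)] : Fin 3 → V) = fun i => e (v i) by
        funext i; fin_cases i <;> rfl]
      rw [h0 v (card1 v 0 ?_), nuAux_apply]
      · simp [hεe, hv0, hv1, hv2]
      · intro s hs; fin_cases s <;> simp_all
  intro a
  rw [key, nuAux_apply]
  refine Submodule.add_mem _ (Submodule.add_mem _ ?_ ?_) ?_ <;>
    exact Submodule.smul_mem _ _ (Submodule.subset_span ⟨_, rfl⟩)
end

section
/- Let p be a partition of n with p_m = 0 and let μ be an n-ary algebra structure on an m-dimensional space V with basis e_1,...,e_m such that μ(e_{φ(1)},...,e_{φ(n)}) = α_φ e_m for all φ : {1,...,n} → {1,...,m}, where α_φ = 0 if |φ^{-1}(i)| ≠ p_i for some 1 ≤ i ≤ m−1. Set e_i^α = e_i for i ≠ x and e_x^α = e_x + α e_y, for 1 ≤ x < y ≤ m and α a scalar. Then for ψ : {1,...,n} → {1,...,m}: if |ψ^{-1}(i)| = p_i for all i ∉ {x,y}, |ψ^{-1}(x)| = p_x + k, and |ψ^{-1}(y)| = p_y − k with k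 ≥ 0, then μ(e_{ψ(1)}^α,...,e_{ψ(n)}^α) = (α^k Σ_{S ⊆ ψ^{-1}(x), |S|=k} α_{∂_S^y ψ}) e_m, and otherwise μ(e_{ψ(1)}^α,...,e_{ψ(n)}^α) = 0. -/
lemma cnt_sum {n m : ℕ} (φ : Fin n → Fin m) : ∑ i, cnt φ i = n := by
  classical
  have h := Finset.card_eq_sum_card_fiberwise
    (f := φ) (s := Finset.univ) (t := Finset.univ) (fun a _ => Finset.mem_univ _)
  simpa [cnt, Finset.card_univ] using h.symm

lemma cnt_ne {n m : ℕ} (ψ : Fin n → Fin m) (S : Finset (Fin n)) {x y i : Fin m}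
    (hS : ∀ t ∈ S, ψ t = x) (hix : i ≠ x) (hiy : i ≠ y) :
    cnt (fun t => if t ∈ S then y else ψ t) i = cnt ψ i := by
  unfold cnt
  congr 1
  ext t
  simp only [Finset.mem_filter, Finset.mem_univ, true_and]
  by_cases h : t ∈ S
  · simp only [h, if_true]
    exact iff_of_false (fun h' => hiy h'.symm)
      (fun h' => hix ((hS t h).symm.trans h').symm)
  · simp [h]

lemma cnt_x {n m : ℕ} (ψ : Fin n → Fin m) (S : Finset (Fin n)) {x y : Fin m}
    (hS : S ⊆ Finset.univ.filter fun t => ψ t = x) (hxy : x ≠ y) :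
    cnt (fun t => if t ∈ S then y else ψ t) x + S.card = cnt ψ x := by
  classical
  have hfe : (Finset.univ.filter fun t => (if t ∈ S then y else ψ t) = x)
      = (Finset.univ.filter fun t => ψ t = x) \ S := by
    ext t
    simp only [Finset.mem_filter, Finset.mem_univ, true_and, Finset.mem_sdiff]
    by_cases h : t ∈ S
    · simp only [h, if_true]
      simp [h, hxy.symm]
    · simp [h]
  unfold cnt
  rw [hfe, Finset.card_sdiff_of_subset hS]
  have := Finset.card_le_card hS
  omega

lemma cnt_y {n m : ℕ} (ψ : Fin n → Fin m) (S : Finset (Fin n)) {x y : Fin m}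
    (hS : ∀ t ∈ S, ψ t = x) (hxy : x ≠ y) :
    cnt (fun t => if t ∈ S then y else ψ t) y = cnt ψ y + S.card := by
  classical
  have hfe : (Finset.univ.filter fun t => (if t ∈ S then y else ψ t) = y)
      = (Finset.univ.filter fun t => ψ t = y) ∪ S := by
    ext t
    simp only [Finset.mem_filter, Finset.mem_univ, true_and, Finset.mem_union]
    by_cases h : t ∈ S
    · simp [h]
    · simp [h]
  unfold cnt
  rw [hfe, Finset.card_union_of_disjoint]
  rw [Finset.disjoint_left]
  intro t ht hts
  exact hxy ((hS t hts).symm.trans (Finset.mem_filter.mp ht).2)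

lemma expand_mu {𝕜 V : Type*} [Field 𝕜] [AddCommGroup V] [Module 𝕜 V]
    {n m : ℕ} (e : Module.Basis (Fin (m + 1)) 𝕜 V)
    (μ : MultilinearMap 𝕜 (fun _ : Fin n => V) V)
    (αf : (Fin n → Fin (m + 1)) → 𝕜)
    (hμ : ∀ φ : Fin n → Fin (m + 1), μ (fun t => e (φ t)) = αf φ • e (Fin.last m))
    (x y : Fin (m + 1)) (α : 𝕜) (ψ : Fin n → Fin (m + 1)) :
    μ (fun t => if ψ t = x then e x + α • e y else e (ψ t)) =
      (∑ S ∈ (Finset.univ.filter fun t => ψ t = x).powerset,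
        α ^ S.card * αf fun t => if t ∈ S then y else ψ t) • e (Fin.last m) := by
  classical
  have hsplit : (fun t => if ψ t = x then e x + α • e y else e (ψ t)) =
      (fun t : Fin n => if ψ t = x then α • e y else 0) + fun t => e (ψ t) := by
    funext t
    by_cases h : ψ t = x <;> simp [h, add_comm]
  rw [hsplit, μ.map_add_univ, Finset.sum_smul]
  have hvanish : ∀ s ∈ (Finset.univ : Finset (Finset (Fin n))),
      s ∉ (Finset.univ.filter fun t => ψ t = x).powerset →
      μ (s.piecewise (fun t => if ψ t = x then α • e y else 0) fun t => e (ψ t)) = 0 := by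
    intro s _ hs
    rw [Finset.mem_powerset] at hs
    obtain ⟨t, hts, htx⟩ := Finset.not_subset.mp hs
    have htx' : ψ t ≠ x := by
      intro h; exact htx (Finset.mem_filter.mpr ⟨Finset.mem_univ _, h⟩)
    exact μ.map_coord_zero t (by simp [Finset.piecewise, hts, htx'])
  rw [← Finset.sum_subset (Finset.subset_univ _) hvanish]
  apply Finset.sum_congr rfl
  intro s hs
  have hs' : ∀ t ∈ s, ψ t = x := fun t ht =>
    (Finset.mem_filter.mp (Finset.mem_powerset.mp hs ht)).2
  have hpw : s.piecewise (fun t => if ψ t = x then α • e y else 0) (fun t => e (ψ t))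
      = fun t => (if t ∈ s then α else 1) • e ((fun t => if t ∈ s then y else ψ t) t) := by
    funext t
    by_cases h : t ∈ s
    · simp [Finset.piecewise, h, hs' t h]
    · simp [Finset.piecewise, h]
  rw [hpw, μ.map_smul_univ, hμ, smul_smul]
  congr 1
  congr 1
  rw [Finset.prod_ite_mem, Finset.univ_inter, Finset.prod_const]

/-- expansion of `μ(e^α_{ψ(1)},…,e^α_{ψ(n)})` where `e^α_x = e_x + α e_y`
and `e^α_i = e_i` otherwise.  If `|ψ⁻¹(i)| = p_i` for `i ∉ {x,y}`,
`|ψ⁻¹(x)| = p_x + k` and `|ψ⁻¹(y)| = p_y − k`, the value is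
`(α^k ∑_{S ⊆ ψ⁻¹(x), |S| = k} α_{∂_S^y ψ}) e_m`; otherwise it is `0`.
(The dimension of `V` is `m + 1`, with top basis index `Fin.last m`.) -/
theorem p_minimal_expansion
    {𝕜 V : Type*} [Field 𝕜] [AddCommGroup V] [Module 𝕜 V]
    (n m : ℕ) (hn : 2 ≤ n) (e : Module.Basis (Fin (m + 1)) 𝕜 V)
    (μ : MultilinearMap 𝕜 (fun _ : Fin n => V) V)
    (p : Fin (m + 1) → ℕ)
    (hpmono : ∀ i j : Fin (m + 1), i ≤ j → p j ≤ p i)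
    (hpsum : ∑ i, p i = n) (hpm : p (Fin.last m) = 0)
    (αf : (Fin n → Fin (m + 1)) → 𝕜)
    (hμ : ∀ φ : Fin n → Fin (m + 1), μ (fun t => e (φ t)) = αf φ • e (Fin.last m))
    (hα : ∀ φ : Fin n → Fin (m + 1),
      (∃ i : Fin (m + 1), i ≠ Fin.last m ∧ cnt φ i ≠ p i) → αf φ = 0) :
    ∀ x y : Fin (m + 1), x < y → ∀ α : 𝕜, ∀ ψ : Fin n → Fin (m + 1),
      (∀ K : ℕ, (∀ i, i ≠ x → i ≠ y → cnt ψ i = p i) → cnt ψ x = p x + K →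
        cnt ψ y + K = p y →
        μ (fun t => (fun i => if i = x then e x + α • e y else e i) (ψ t)) =
          (α ^ K * ∑ S ∈ Finset.powersetCard K (Finset.univ.filter fun t => ψ t = x),
            αf fun t => if t ∈ S then y else ψ t) • e (Fin.last m)) ∧
      ((¬ ∃ K : ℕ, (∀ i, i ≠ x → i ≠ y → cnt ψ i = p i) ∧ cnt ψ x = p x + K ∧
          cnt ψ y + K = p y) →
        μ (fun t => (fun i => if i = x then e x + α • e y else e i) (ψ t)) = 0) := by
  classical
  intro x y hxy α ψ
  have hxy' : x ≠ y := ne_of_lt hxy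
  have hxlast : x ≠ Fin.last m := ne_of_lt (lt_of_lt_of_le hxy (Fin.le_last y))
  have hexp := expand_mu e μ αf hμ x y α ψ
  constructor
  · intro K hcnt hcx hcy
    show μ (fun t => if ψ t = x then e x + α • e y else e (ψ t)) = _
    rw [hexp]
    congr 1
    rw [Finset.mul_sum]
    have hsub : Finset.powersetCard K (Finset.univ.filter fun t => ψ t = x) ⊆
        (Finset.univ.filter fun t => ψ t = x).powerset := by
      intro S hS
      exact Finset.mem_powerset.mpr (Finset.mem_powersetCard.mp hS).1
    have hzero : ∀ S ∈ (Finset.univ.filter fun t => ψ t = x).powerset,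
        S ∉ Finset.powersetCard K (Finset.univ.filter fun t => ψ t = x) →
        α ^ S.card * αf (fun t => if t ∈ S then y else ψ t) = 0 := by
      intro S hS hSK
      have hSs := Finset.mem_powerset.mp hS
      have hcard : S.card ≠ K := fun h =>
        hSK (Finset.mem_powersetCard.mpr ⟨hSs, h⟩)
      have hx0 := cnt_x ψ S hSs hxy'
      have : αf (fun t => if t ∈ S then y else ψ t) = 0 := by
        apply hα
        exact ⟨x, hxlast, by omega⟩
      rw [this, mul_zero]
    rw [← Finset.sum_subset hsub hzero]
    apply Finset.sum_congr rfl
    intro S hS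
    rw [(Finset.mem_powersetCard.mp hS).2]
  · intro hno
    show μ (fun t => if ψ t = x then e x + α • e y else e (ψ t)) = 0
    rw [hexp]
    convert zero_smul 𝕜 (e (Fin.last m))
    apply Finset.sum_eq_zero
    intro S hS
    have hSs := Finset.mem_powerset.mp hS
    have hS' : ∀ t ∈ S, ψ t = x := fun t ht => (Finset.mem_filter.mp (hSs ht)).2
    have haf : αf (fun t => if t ∈ S then y else ψ t) = 0 := by
      by_contra hne
      have hall : ∀ i, i ≠ Fin.last m →
          cnt (fun t => if t ∈ S then y else ψ t) i = p i := by
        intro i hi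
        by_contra hc
        exact hne (hα _ ⟨i, hi, hc⟩)
      -- the top fiber count also matches
      have hlastc : cnt (fun t => if t ∈ S then y else ψ t) (Fin.last m)
          = p (Fin.last m) := by
        have h1 : ∑ i, cnt (fun t => if t ∈ S then y else ψ t) i = ∑ i, p i := by
          rw [cnt_sum, hpsum]
        rw [← Finset.add_sum_erase _ _ (Finset.mem_univ (Fin.last m)),
          ← Finset.add_sum_erase _ p (Finset.mem_univ (Fin.last m))] at h1
        have h4 : ∑ i ∈ Finset.univ.erase (Fin.last m),
            cnt (fun t => if t ∈ S then y else ψ t) i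
            = ∑ i ∈ Finset.univ.erase (Fin.last m), p i :=
          Finset.sum_congr rfl fun i hi => hall i (Finset.ne_of_mem_erase hi)
        rw [h4] at h1
        exact Nat.add_right_cancel h1
      have hall' : ∀ i, cnt (fun t => if t ∈ S then y else ψ t) i = p i := by
        intro i
        by_cases hi : i = Fin.last m
        · rw [hi]; exact hlastc
        · exact hall i hi
      apply hno
      refine ⟨S.card, ?_, ?_, ?_⟩
      · intro i hix hiy
        rw [← cnt_ne ψ S hS' hix hiy]
        exact hall' i
      · have := cnt_x ψ S hSs hxy'
        rw [hall' x] at this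
        omega
      · have := cnt_y ψ S hS' hxy'
        rw [hall' y] at this
        omega
    rw [haf, mul_zero]
end
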